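/- arXiv:2412.07816 — 6 statements merged into one kernel-verified Lean document; each statement's English description precedes it below -/
import Mathlib

section
/- Let (d, r) be an arithmetical structure on the wheel graph W_n (n ≥ 4) with r ≠ (1,1,...,1). Then exactly one of the following holds: (1) d_0 > n and d_i < 3 for some i ≥ 1; (2) d_0 < n and d_i > 3 for some i ≥ 1; (3) d_0 = n and there exist distinct i, j ≥ 1 with d_i < 3 and d_j > 3. -/
/-!
Summing the cycle equations `d_i r_i = r_0 + r_{i-1} + r_{i+1}` and using the hub equation
`∑ r_i = d_0 r_0` gives the balance identity `∑ (d_i - 3) r_i = (n - d_0) r_0`. Since every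
`r_i` is positive, the sign of `n - d_0` forces some `d_i - 3` of the same sign, and when
`d_0 = n` the weighted sum vanishes, so it has terms of both signs unless all `d_i = 3`. In that
last case `r` restricted to the cycle attains its maximum and minimum at vertices where it is the
average of `r_0` and two cycle values, so it is constantly `r_0`, and primitivity gives `r = 1`.
-/

/-- Predecessor of cycle vertex `i` in the cycle `v_1, …, v_n`. -/
def cyclePrev (n i : ℕ) : ℕ := if i = 1 then n else i - 1

/-- Successor of cycle vertex `i` in the cycle `v_1, …, v_n`. -/
def cycleNext (n i : ℕ) : ℕ := if i = n then 1 else i + 1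

/-- `(d, r)` is an arithmetical structure on the wheel graph `W_n`, whose hub `v_0`
is indexed by `0` and whose cycle vertices `v_1, …, v_n` are indexed by `1, …, n`. -/
def IsWheelArithStructure (n : ℕ) (d r : ℕ → ℕ) : Prop :=
  (∀ i ≤ n, 0 < d i) ∧ (∀ i ≤ n, 0 < r i) ∧
  (Finset.range (n + 1)).gcd r = 1 ∧
  d 0 * r 0 = ∑ i ∈ Finset.Icc 1 n, r i ∧
  ∀ i, 1 ≤ i → i ≤ n → d i * r i = r 0 + r (cyclePrev n i) + r (cycleNext n i)

open Finset

section Cycle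

variable {n i : ℕ}

lemma cyclePrev_mem_Icc (hi : i ∈ Icc 1 n) : cyclePrev n i ∈ Icc 1 n := by
  simp only [mem_Icc] at *
  unfold cyclePrev
  split <;> omega

lemma cycleNext_mem_Icc (hi : i ∈ Icc 1 n) : cycleNext n i ∈ Icc 1 n := by
  simp only [mem_Icc] at *
  unfold cycleNext
  split <;> omega

lemma cycleNext_cyclePrev (hi : i ∈ Icc 1 n) : cycleNext n (cyclePrev n i) = i := by
  simp only [mem_Icc] at hi
  unfold cyclePrev cycleNext
  split_ifs <;> omega

lemma cyclePrev_cycleNext (hi : i ∈ Icc 1 n) : cyclePrev n (cycleNext n i) = i := by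
  simp only [mem_Icc] at hi
  unfold cyclePrev cycleNext
  split_ifs <;> omega

variable {M : Type*} [AddCommMonoid M]

lemma sum_Icc_cyclePrev (f : ℕ → M) :
    ∑ i ∈ Icc 1 n, f (cyclePrev n i) = ∑ i ∈ Icc 1 n, f i :=
  sum_nbij' (cyclePrev n) (cycleNext n) (fun _ => cyclePrev_mem_Icc)
    (fun _ => cycleNext_mem_Icc) (fun _ => cycleNext_cyclePrev) (fun _ => cyclePrev_cycleNext)
    (fun _ _ => rfl)

lemma sum_Icc_cycleNext (f : ℕ → M) :
    ∑ i ∈ Icc 1 n, f (cycleNext n i) = ∑ i ∈ Icc 1 n, f i :=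
  sum_nbij' (cycleNext n) (cyclePrev n) (fun _ => cycleNext_mem_Icc)
    (fun _ => cyclePrev_mem_Icc) (fun _ => cyclePrev_cycleNext) (fun _ => cycleNext_cyclePrev)
    (fun _ _ => rfl)

end Cycle

namespace IsWheelArithStructure

variable {n : ℕ} {d r : ℕ → ℕ}

lemma r_pos (h : IsWheelArithStructure n d r) {i : ℕ} (hi : i ≤ n) : 0 < r i := h.2.1 i hi

lemma cycle_eq (h : IsWheelArithStructure n d r) {i : ℕ} (hi : i ∈ Icc 1 n) :
    d i * r i = r 0 + r (cyclePrev n i) + r (cycleNext n i) :=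
  (mem_Icc.1 hi).elim (h.2.2.2.2 i)

lemma sum_Icc_mul_eq (h : IsWheelArithStructure n d r) :
    ∑ i ∈ Icc 1 n, d i * r i = n * r 0 + 2 * ∑ i ∈ Icc 1 n, r i := by
  rw [sum_congr rfl fun i hi => h.cycle_eq hi, sum_add_distrib, sum_add_distrib,
    sum_Icc_cyclePrev r, sum_Icc_cycleNext r, sum_const, Nat.card_Icc, smul_eq_mul,
    Nat.add_sub_cancel]
  ring

lemma sum_Icc_sub_three_mul_eq (h : IsWheelArithStructure n d r) :
    ∑ i ∈ Icc 1 n, ((d i : ℤ) - 3) * r i = ((n : ℤ) - d 0) * r 0 := by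
  have hsum : (∑ i ∈ Icc 1 n, d i * r i : ℤ) = n * r 0 + 2 * ∑ i ∈ Icc 1 n, (r i : ℤ) := by
    exact_mod_cast h.sum_Icc_mul_eq
  have hhub : (d 0 * r 0 : ℤ) = ∑ i ∈ Icc 1 n, (r i : ℤ) := by exact_mod_cast h.2.2.2.1
  simp only [sub_mul, sum_sub_distrib, ← mul_sum, hsum, ← hhub]
  ring

lemma eq_hub_of_forall_eq_three (h : IsWheelArithStructure n d r)
    (h3 : ∀ i ∈ Icc 1 n, d i = 3) : ∀ i ∈ Icc 1 n, r i = r 0 := by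
  intro i hi
  have harmonic : ∀ j ∈ Icc 1 n, 3 * r j = r 0 + r (cyclePrev n j) + r (cycleNext n j) :=
    fun j hj => h3 j hj ▸ h.cycle_eq hj
  obtain ⟨iM, hiM, hM⟩ := exists_max_image (Icc 1 n) r ⟨i, hi⟩
  obtain ⟨im, him, hm⟩ := exists_min_image (Icc 1 n) r ⟨i, hi⟩
  have hmax : r iM ≤ r 0 := by
    have := harmonic iM hiM
    have := hM _ (cyclePrev_mem_Icc hiM)
    have := hM _ (cycleNext_mem_Icc hiM)
    omega
  have hmin : r 0 ≤ r im := by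
    have := harmonic im him
    have := hm _ (cyclePrev_mem_Icc him)
    have := hm _ (cycleNext_mem_Icc him)
    omega
  exact le_antisymm ((hM i hi).trans hmax) (hmin.trans (hm i hi))

lemma eq_one_of_forall_eq_three (h : IsWheelArithStructure n d r)
    (h3 : ∀ i ∈ Icc 1 n, d i = 3) : ∀ i ≤ n, r i = 1 := by
  have hconst : ∀ i ≤ n, r i = r 0 := fun i hi => by
    rcases Nat.eq_zero_or_pos i with rfl | hi0
    · rfl
    · exact h.eq_hub_of_forall_eq_three h3 i (mem_Icc.2 ⟨hi0, hi⟩)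
  have hdvd : r 0 ∣ (range (n + 1)).gcd r :=
    dvd_gcd fun i hi => (hconst i (Nat.lt_succ_iff.1 (mem_range.1 hi))).symm ▸ dvd_rfl
  rw [h.2.2.1, Nat.dvd_one] at hdvd
  exact fun i hi => (hconst i hi).trans hdvd

end IsWheelArithStructure

section SignOfWeightedSum

lemma three_lt_of_sub_three_mul_pos {a b : ℕ} (hab : 0 < ((a : ℤ) - 3) * b) : 3 < a := by
  have := pos_of_mul_pos_left hab (Int.natCast_nonneg b)
  omega

lemma lt_three_of_sub_three_mul_neg {a b : ℕ} (hab : ((a : ℤ) - 3) * b < 0) : a < 3 := by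
  have := neg_of_mul_neg_left hab (Int.natCast_nonneg b)
  omega

variable {s : Finset ℕ} {d r : ℕ → ℕ}

lemma exists_three_lt_of_sum_pos (hs : 0 < ∑ i ∈ s, ((d i : ℤ) - 3) * r i) :
    ∃ i ∈ s, 3 < d i := by
  obtain ⟨i, hi, hpos⟩ :=
    exists_lt_of_sum_lt (f := fun _ => 0) (g := fun i => ((d i : ℤ) - 3) * r i)
      (by rwa [sum_const_zero])
  exact ⟨i, hi, three_lt_of_sub_three_mul_pos hpos⟩

lemma exists_lt_three_of_sum_neg (hs : ∑ i ∈ s, ((d i : ℤ) - 3) * r i < 0) :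
    ∃ i ∈ s, d i < 3 := by
  obtain ⟨i, hi, hneg⟩ :=
    exists_lt_of_sum_lt (f := fun i => ((d i : ℤ) - 3) * r i) (g := fun _ => 0)
      (by rwa [sum_const_zero])
  exact ⟨i, hi, lt_three_of_sub_three_mul_neg hneg⟩

lemma exists_lt_three_and_three_lt_of_sum_eq_zero (hr : ∀ i ∈ s, 0 < r i)
    (hs : ∑ i ∈ s, ((d i : ℤ) - 3) * r i = 0) (hne : ∃ i ∈ s, d i ≠ 3) :
    (∃ i ∈ s, d i < 3) ∧ ∃ j ∈ s, 3 < d j := by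
  have hne' : ∃ i ∈ s, ((d i : ℤ) - 3) * r i ≠ 0 := by
    obtain ⟨i, hi, hd⟩ := hne
    exact ⟨i, hi, mul_ne_zero (by omega) (by have := hr i hi; omega)⟩
  obtain ⟨i, hi, hneg⟩ :=
    exists_pos_of_sum_zero_of_exists_nonzero (fun i => -(((d i : ℤ) - 3) * r i))
      (by rw [sum_neg_distrib, hs, neg_zero]) (by simpa using hne')
  obtain ⟨j, hj, hpos⟩ := exists_pos_of_sum_zero_of_exists_nonzero _ hs hne'
  exact ⟨⟨i, hi, lt_three_of_sub_three_mul_neg (neg_pos.1 hneg)⟩,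
    ⟨j, hj, three_lt_of_sub_three_mul_pos hpos⟩⟩

end SignOfWeightedSum

theorem wheel_nontrivial_structure_trichotomy_general (n : ℕ) (d r : ℕ → ℕ)
    (h : IsWheelArithStructure n d r) (hr : ¬ ∀ i ≤ n, r i = 1) :
    (n < d 0 ∧ ∃ i, 1 ≤ i ∧ i ≤ n ∧ d i < 3) ∨
    (d 0 < n ∧ ∃ i, 1 ≤ i ∧ i ≤ n ∧ 3 < d i) ∨
    (d 0 = n ∧ ∃ i j, 1 ≤ i ∧ i ≤ n ∧ 1 ≤ j ∧ j ≤ n ∧ i ≠ j ∧ d i < 3 ∧ 3 < d j) := by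
  have balance := h.sum_Icc_sub_three_mul_eq
  have hr0 : (0 : ℤ) < r 0 := by exact_mod_cast h.r_pos (Nat.zero_le n)
  rcases lt_trichotomy n (d 0) with hlt | heq | hgt
  · obtain ⟨i, hi, hd⟩ := exists_lt_three_of_sum_neg (s := Icc 1 n) (d := d) (r := r) <| by
      rw [balance]; exact mul_neg_of_neg_of_pos (by omega) hr0
    exact Or.inl ⟨hlt, i, (mem_Icc.1 hi).1, (mem_Icc.1 hi).2, hd⟩
  · have hne : ∃ i ∈ Icc 1 n, d i ≠ 3 := by
      by_contra! hall
      exact hr (h.eq_one_of_forall_eq_three hall)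
    obtain ⟨⟨i, hi, hdi⟩, j, hj, hdj⟩ :=
      exists_lt_three_and_three_lt_of_sum_eq_zero (fun i hi => h.r_pos (mem_Icc.1 hi).2)
        (by rw [balance, heq, sub_self, zero_mul]) hne
    exact Or.inr <| Or.inr ⟨heq.symm, i, j, (mem_Icc.1 hi).1, (mem_Icc.1 hi).2,
      (mem_Icc.1 hj).1, (mem_Icc.1 hj).2, by rintro rfl; omega, hdi, hdj⟩
  · obtain ⟨i, hi, hd⟩ := exists_three_lt_of_sum_pos (s := Icc 1 n) (d := d) (r := r) <| by
      rw [balance]; exact mul_pos (by omega) hr0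
    exact Or.inr <| Or.inl ⟨hgt, i, (mem_Icc.1 hi).1, (mem_Icc.1 hi).2, hd⟩

/-- If `(d, r)` is an arithmetical structure on `W_n` (`n ≥ 4`) with `r ≠ (1, …, 1)`,
then exactly one of the three stated alternatives holds (they are mutually exclusive
since they are distinguished by the trichotomy of `d 0` versus `n`). -/
theorem wheel_nontrivial_structure_trichotomy (n : ℕ) (hn : 4 ≤ n) (d r : ℕ → ℕ)
    (h : IsWheelArithStructure n d r) (hr : ¬ ∀ i ≤ n, r i = 1) :
    (n < d 0 ∧ ∃ i, 1 ≤ i ∧ i ≤ n ∧ d i < 3) ∨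
    (d 0 < n ∧ ∃ i, 1 ≤ i ∧ i ≤ n ∧ 3 < d i) ∨
    (d 0 = n ∧ ∃ i j, 1 ≤ i ∧ i ≤ n ∧ 1 ≤ j ∧ j ≤ n ∧ i ≠ j ∧ d i < 3 ∧ 3 < d j) :=
  wheel_nontrivial_structure_trichotomy_general n d r h hr
end

section
/- If k is a positive integer dividing n, then the pair (d, r) with d = (n/k, 2+k, 2+k, ..., 2+k) and r = (k, 1, 1, ..., 1) is an arithmetical structure on the wheel graph W_n. -/
/-- If `k ∣ n` then `d = (n/k, 2+k, …, 2+k)`, `r = (k, 1, …, 1)` is an arithmetical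
structure on the wheel graph `W_n`. -/
theorem wheel_arith_structure_of_dvd (n k : ℕ) (hn : 3 ≤ n) (hk : 0 < k) (hkn : k ∣ n) :
    IsWheelArithStructure n
      (fun i => if i = 0 then n / k else 2 + k)
      (fun i => if i = 0 then k else 1) := by
  refine ⟨?_, ?_, ?_, ?_, ?_⟩
  · intro i _
    by_cases h : i = 0 <;> simp [h]
    exact ⟨hk, Nat.le_of_dvd (by omega) hkn⟩
  · intro i _
    by_cases h : i = 0 <;> simp [h, hk]
  · have h1 : (1 : ℕ) ∈ Finset.range (n + 1) := by simp; omega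
    have := Finset.gcd_dvd (f := fun i => if i = 0 then k else 1) h1
    simp at this
    exact this
  · simp [Nat.div_mul_cancel hkn]
    rw [Finset.sum_congr rfl (fun x hx => by
      rw [if_neg (by simp at hx; omega)])]
    simp
  · intro i h1 h2
    have hi : i ≠ 0 := by omega
    have hp : cyclePrev n i ≠ 0 := by unfold cyclePrev; split <;> omega
    have hs : cycleNext n i ≠ 0 := by unfold cycleNext; split <;> omega
    simp only [if_neg hi, if_neg hp, if_neg hs, if_pos rfl, mul_one, ite_true]
    omega
end

section
/- Let C_n be the cycle graph, and let d, r be positive integer vectors such that (diag(d) - A(C_n)) r = a·(1,...,1) for some positive integer a dividing r_1 + ... + r_n. Setting g = gcd(a, r_1, ..., r_n), the pair (d̃, r̃) with d̃ = ((r_1+...+r_n)/a, d_1, ..., d_n) and r̃ = (a/g, r_1/g, ..., r_n/g) is an arithmetical structure on the wheel graph W_n. -/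
/-
The wheel equations are the cycle equations `d_i r_i = r_{i-1} + r_{i+1} + a` with the constant
`a` read as the label `r_0` of the hub, together with the hub equation `d_0 r_0 = ∑ r_i`, which
holds with `d_0 = (∑ r_i) / a` because `a` divides the sum. All these equations are homogeneous
in `r`, so dividing `(a, r_1, …, r_n)` by its gcd `g` keeps them and makes the vector primitive.
-/

lemma Nat.mul_div_eq_add_add_div {g d x y z w : ℕ} (hx : g ∣ x) (hy : g ∣ y) (hz : g ∣ z)
    (h : d * x = y + z + w) : d * (x / g) = y / g + z / g + w / g := by
  rw [← Nat.mul_div_assoc d hx, h, Nat.add_div_of_dvd_right (dvd_add hy hz),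
    Nat.add_div_of_dvd_right hy]

lemma cyclePrev_mem_Icc_s6 {n i : ℕ} (h1 : 1 ≤ i) (hn : i ≤ n) : cyclePrev n i ∈ Finset.Icc 1 n := by
  unfold cyclePrev
  split <;> simp only [Finset.mem_Icc] <;> omega

lemma cycleNext_mem_Icc_s6 {n i : ℕ} (h1 : 1 ≤ i) (hn : i ≤ n) : cycleNext n i ∈ Finset.Icc 1 n := by
  unfold cycleNext
  split <;> simp only [Finset.mem_Icc] <;> omega

lemma isWheelArithStructure_div_gcd {n : ℕ} {d r : ℕ → ℕ} (hd : ∀ i ≤ n, 0 < d i)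
    (hr : ∀ i ≤ n, 0 < r i) (hhub : d 0 * r 0 = ∑ i ∈ Finset.Icc 1 n, r i)
    (hcycle : ∀ i, 1 ≤ i → i ≤ n → d i * r i = r 0 + r (cyclePrev n i) + r (cycleNext n i)) :
    IsWheelArithStructure n d (fun i => r i / (Finset.range (n + 1)).gcd r) := by
  set g := (Finset.range (n + 1)).gcd r
  have hg_dvd : ∀ i ≤ n, g ∣ r i := fun i hi =>
    Finset.gcd_dvd (Finset.mem_range.mpr (Nat.lt_succ_of_le hi))
  have hg_dvd_Icc : ∀ i ∈ Finset.Icc 1 n, g ∣ r i := fun i hi =>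
    hg_dvd i (Finset.mem_Icc.mp hi).2
  have hg_pos : 0 < g := Nat.pos_of_dvd_of_pos (hg_dvd 0 n.zero_le) (hr 0 n.zero_le)
  refine ⟨hd, fun i hi => Nat.div_pos (Nat.le_of_dvd (hr i hi) (hg_dvd i hi)) hg_pos,
    Finset.gcd_div_eq_one (Finset.mem_range.mpr n.succ_pos) (hr 0 n.zero_le).ne', ?_, ?_⟩
  · rw [← Nat.mul_div_assoc _ (hg_dvd 0 n.zero_le), hhub, Nat.sum_div hg_dvd_Icc]
  · intro i h1 hn
    exact Nat.mul_div_eq_add_add_div (hg_dvd i hn) (hg_dvd 0 n.zero_le)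
      (hg_dvd_Icc _ (cyclePrev_mem_Icc_s6 h1 hn)) (hcycle i h1 hn)

lemma gcd_range_succ_ite_zero (n a : ℕ) (r : ℕ → ℕ) :
    (Finset.range (n + 1)).gcd (fun i => if i = 0 then a else r i)
      = Nat.gcd a ((Finset.Icc 1 n).gcd r) := by
  rw [Nat.range_succ_eq_Icc_zero, ← Finset.insert_Icc_add_one_left_eq_Icc n.zero_le,
    Finset.gcd_insert, if_pos rfl]
  congr 1
  exact Finset.gcd_congr rfl fun i hi => if_neg (by simp at hi; omega)

/-- If `(diag d - A(C_n)) r = a·𝟏` with `a ∣ r 1 + ⋯ + r n` and `g = gcd(a, r 1, …, r n)`,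
then `((∑ r)/a, d 1, …, d n)` together with `(a/g, r 1/g, …, r n/g)` is an arithmetical
structure on the wheel graph `W_n`. -/
theorem wheel_structure_from_cycle_constant (n : ℕ) (hn : 3 ≤ n) (d r : ℕ → ℕ) (a : ℕ)
    (ha : 0 < a)
    (hd : ∀ i, 1 ≤ i → i ≤ n → 0 < d i) (hr : ∀ i, 1 ≤ i → i ≤ n → 0 < r i)
    (heq : ∀ i, 1 ≤ i → i ≤ n →
      d i * r i = r (cyclePrev n i) + r (cycleNext n i) + a)
    (hdvd : a ∣ ∑ i ∈ Finset.Icc 1 n, r i) :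
    IsWheelArithStructure n
      (fun i => if i = 0 then (∑ j ∈ Finset.Icc 1 n, r j) / a else d i)
      (fun i => if i = 0 then a / Nat.gcd a ((Finset.Icc 1 n).gcd r)
        else r i / Nat.gcd a ((Finset.Icc 1 n).gcd r)) := by
  have hne_zero : ∀ i ∈ Finset.Icc 1 n, i ≠ 0 := fun i hi =>
    Nat.one_le_iff_ne_zero.mp (Finset.mem_Icc.mp hi).1
  have hsum_pos : 0 < ∑ i ∈ Finset.Icc 1 n, r i :=
    Finset.sum_pos' (fun i _ => Nat.zero_le _)
      ⟨1, Finset.mem_Icc.mpr ⟨le_rfl, by omega⟩, hr 1 le_rfl (by omega)⟩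
  have key := isWheelArithStructure_div_gcd (n := n)
    (d := fun i => if i = 0 then (∑ j ∈ Finset.Icc 1 n, r j) / a else d i)
    (r := fun i => if i = 0 then a else r i)
    (fun i hi => by
      split_ifs with h0
      · exact Nat.div_pos (Nat.le_of_dvd hsum_pos hdvd) ha
      · exact hd i (Nat.one_le_iff_ne_zero.mpr h0) hi)
    (fun i hi => by
      split_ifs with h0
      exacts [ha, hr i (Nat.one_le_iff_ne_zero.mpr h0) hi])
    (by
      simp only [↓reduceIte, Nat.div_mul_cancel hdvd]
      exact Finset.sum_congr rfl fun i hi => (if_neg (hne_zero i hi)).symm)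
    (fun i h1 hn => by
      have hi := Finset.mem_Icc.mpr ⟨h1, hn⟩
      simp only [↓reduceIte, hne_zero i hi, hne_zero _ (cyclePrev_mem_Icc_s6 h1 hn),
        hne_zero _ (cycleNext_mem_Icc_s6 h1 hn)]
      linarith [heq i h1 hn])
  rw [gcd_range_succ_ite_zero] at key
  simpa only [apply_ite (· / Nat.gcd a ((Finset.Icc 1 n).gcd r))] using key
end

section
/- Let (d, r) be an arithmetical structure on the cycle C_n such that for each i, r_i divides the sum of the other entries ∑_{j≠i} r_j. Then the pair (d̃, r̃) defined by d̃_0 = 1, d̃_i = d_i + (r_1 + ... + r_n)/r_i for 1 ≤ i ≤ n, r̃_0 = r_1 + ... + r_n, and r̃_i = r_i for 1 ≤ i ≤ n, is an arithmetical structure on the wheel graph W_n. -/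
/-- `(d, r)` is an arithmetical structure on the cycle `C_n` with vertices `v_1, …, v_n`. -/
def IsCycleArithStructure (n : ℕ) (d r : ℕ → ℕ) : Prop :=
  (∀ i, 1 ≤ i → i ≤ n → 0 < d i) ∧ (∀ i, 1 ≤ i → i ≤ n → 0 < r i) ∧
  (Finset.Icc 1 n).gcd r = 1 ∧
  ∀ i, 1 ≤ i → i ≤ n → d i * r i = r (cyclePrev n i) + r (cycleNext n i)

/-!
Adding the hub with weight `R = r 1 + ⋯ + r n` adds `R` to the right-hand side of every cycle
equation, which is absorbed by raising `d i` by `R / r i`; this is an integer exactly when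
`r i ∣ R`, i.e. when `r i` divides the sum of the other entries. The hub equation holds with
`d̃ 0 = 1` by the choice of `R`, and `r̃` stays primitive because it contains `r`.
-/

open Finset

theorem cyclePrev_pos {n i : ℕ} (hi : 1 ≤ i) (hin : i ≤ n) : 0 < cyclePrev n i := by
  unfold cyclePrev
  split <;> omega

theorem cycleNext_pos (n i : ℕ) : 0 < cycleNext n i := by
  unfold cycleNext
  split <;> omega

theorem dvd_sum_of_dvd_sum_erase {ι M : Type*} [DecidableEq ι] [CommSemiring M]
    {s : Finset ι} {f : ι → M} {i : ι} (hi : i ∈ s) (h : f i ∣ ∑ j ∈ s.erase i, f j) :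
    f i ∣ ∑ j ∈ s, f j :=
  add_sum_erase s f hi ▸ dvd_add dvd_rfl h

theorem add_div_mul_eq_add {a b c R : ℕ} (hb : b ∣ R) (h : a * b = c) :
    (a + R / b) * b = R + c := by
  rw [add_mul, Nat.div_mul_cancel hb, h, add_comm]

namespace IsCycleArithStructure

variable {n : ℕ} {d r : ℕ → ℕ}

theorem one_le (h : IsCycleArithStructure n d r) : 1 ≤ n := by
  by_contra! hn
  have hgcd := h.2.2.1
  simp [Nat.lt_one_iff.mp hn] at hgcd

theorem sum_pos (h : IsCycleArithStructure n d r) : 0 < ∑ j ∈ Icc 1 n, r j :=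
  Finset.sum_pos (fun i hi => h.2.1 i (mem_Icc.mp hi).1 (mem_Icc.mp hi).2)
    ⟨1, mem_Icc.mpr ⟨le_rfl, h.one_le⟩⟩

end IsCycleArithStructure

theorem wheel_structure_from_cycle_structure_general (n : ℕ) (d r : ℕ → ℕ)
    (h : IsCycleArithStructure n d r)
    (hdvd : ∀ i, 1 ≤ i → i ≤ n → r i ∣ ∑ j ∈ (Finset.Icc 1 n).erase i, r j) :
    IsWheelArithStructure n
      (fun i => if i = 0 then 1 else d i + (∑ j ∈ Finset.Icc 1 n, r j) / r i)
      (fun i => if i = 0 then ∑ j ∈ Finset.Icc 1 n, r j else r i) := by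
  have hRpos := h.sum_pos
  obtain ⟨hd, hr, hgcd, heq⟩ := h
  set R := ∑ j ∈ Icc 1 n, r j
  have hR : ∀ i ∈ Icc 1 n, (if i = 0 then R else r i) = r i := fun i hi =>
    if_neg (by have := (mem_Icc.mp hi).1; omega)
  refine ⟨fun i hi => ?_, fun i hi => ?_, ?_, ?_, fun i hi hin => ?_⟩
  · rcases Nat.eq_zero_or_pos i with rfl | hi0
    · simp
    · simp only [hi0.ne', if_false]
      exact Nat.lt_add_right _ (hd i hi0 hi)
  · rcases Nat.eq_zero_or_pos i with rfl | hi0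
    · simpa using hRpos
    · simpa [hi0.ne'] using hr i hi0 hi
  · have hsub : Icc 1 n ⊆ range (n + 1) := fun x hx => by
      simp only [mem_Icc, mem_range] at hx ⊢; omega
    have hmono := gcd_mono (f := fun i => if i = 0 then R else r i) hsub
    rwa [gcd_congr rfl hR, hgcd, Nat.dvd_one] at hmono
  · simpa using (sum_congr rfl hR).symm
  · have hRi : r i ∣ R := dvd_sum_of_dvd_sum_erase (mem_Icc.mpr ⟨hi, hin⟩) (hdvd i hi hin)
    have hi0 : i ≠ 0 := by omega
    simp only [(cyclePrev_pos hi hin).ne', (cycleNext_pos n i).ne', hi0, if_false, if_true]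
    rw [add_div_mul_eq_add hRi (heq i hi hin), add_assoc]

/-- From an arithmetical structure on `C_n` in which each `r i` divides the sum of the
other entries, one gets an arithmetical structure on the wheel `W_n` with hub values
`d̃ 0 = 1` and `r̃ 0 = r 1 + ⋯ + r n`. -/
theorem wheel_structure_from_cycle_structure (n : ℕ) (hn : 3 ≤ n) (d r : ℕ → ℕ)
    (h : IsCycleArithStructure n d r)
    (hdvd : ∀ i, 1 ≤ i → i ≤ n → r i ∣ ∑ j ∈ (Finset.Icc 1 n).erase i, r j) :
    IsWheelArithStructure n
      (fun i => if i = 0 then 1 else d i + (∑ j ∈ Finset.Icc 1 n, r j) / r i)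
      (fun i => if i = 0 then ∑ j ∈ Finset.Icc 1 n, r j else r i) :=
  wheel_structure_from_cycle_structure_general n d r h hdvd
end

section
/- Let (d, r) be an arithmetical structure on the wheel graph W_n such that r_0 divides r_1 + r_n, r_n divides r_0, and r_1 divides r_0. Define d̃ and r̃ on W_{n+1} by: d̃_{n+1} = 1, d̃_i = d_i for i ∉ {0, 1, n, n+1}, d̃_0 = d_0 + (r_1 + r_n + r_0)/r_0, d̃_1 = d_1 + (r_1 + r_0)/r_1, d̃_n = d_n + (r_n + r_0)/r_n, and r̃_{n+1} = r_1 + r_n + r_0, r̃_i = r_i otherwise. Then (d̃, r̃) is an arithmetical structure on W_{n+1}, where the new cycle vertex v_{n+1} is inserted between v_n and v_1. -/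
/-!
Subdividing the cycle edge `v_n v_1` by a vertex `v_{n+1}` of label
`r_0 + r_n + r_1` and `d = 1` satisfies the new vertex's equation outright. Each of
`v_0`, `v_1`, `v_n` gains the neighbour `v_{n+1}` (for `v_1` and `v_n` it replaces the
neighbour `v_n`, resp. `v_1`), so its equation stays balanced exactly when its `d` grows
by `r_{n+1} / r_i`, resp. `(r_{n+1} - r_n) / r_1` and `(r_{n+1} - r_1) / r_n`; the
divisibility hypotheses make these quotients exact. All other equations are unchanged,
and `r` stays primitive because it still contains the old primitive entries.
-/

/-- The labels `r̃` on `W_{n+1}`. -/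
def wheelExtendR (n : ℕ) (r : ℕ → ℕ) : ℕ → ℕ :=
  fun i => if i = n + 1 then r 1 + r n + r 0 else r i

/-- The coefficients `d̃` on `W_{n+1}`. -/
def wheelExtendD (n : ℕ) (d r : ℕ → ℕ) : ℕ → ℕ :=
  fun i =>
    if i = 0 then d 0 + (r 1 + r n + r 0) / r 0
    else if i = 1 then d 1 + (r 1 + r 0) / r 1
    else if i = n then d n + (r n + r 0) / r n
    else if i = n + 1 then 1
    else d i

theorem Nat.add_div_mul_of_dvd (c : ℕ) {a b : ℕ} (h : a ∣ b) :
    (c + b / a) * a = c * a + b := by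
  rw [Nat.add_mul, Nat.div_mul_cancel h]

theorem cyclePrev_one (n : ℕ) : cyclePrev n 1 = n := if_pos rfl

theorem cyclePrev_of_ne_one {n i : ℕ} (h : i ≠ 1) : cyclePrev n i = i - 1 := if_neg h

theorem cycleNext_self (n : ℕ) : cycleNext n n = 1 := if_pos rfl

theorem cycleNext_of_ne {n i : ℕ} (h : i ≠ n) : cycleNext n i = i + 1 := if_neg h

section WheelExtend

variable {n : ℕ} {d r : ℕ → ℕ}

theorem wheelExtendR_self_add_one : wheelExtendR n r (n + 1) = r 1 + r n + r 0 := if_pos rfl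

theorem wheelExtendR_of_ne {i : ℕ} (h : i ≠ n + 1) : wheelExtendR n r i = r i :=
  if_neg h

theorem wheelExtendD_one : wheelExtendD n d r 1 = d 1 + (r 1 + r 0) / r 1 := rfl

theorem wheelExtendD_self (hn : 2 ≤ n) :
    wheelExtendD n d r n = d n + (r n + r 0) / r n := by
  rw [wheelExtendD, if_neg (by omega), if_neg (by omega), if_pos rfl]

theorem wheelExtendD_self_add_one (hn : 1 ≤ n) : wheelExtendD n d r (n + 1) = 1 := by
  rw [wheelExtendD, if_neg (by omega), if_neg (by omega), if_neg (by omega), if_pos rfl]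

theorem wheelExtendD_of_ne {i : ℕ} (h0 : i ≠ 0) (h1 : i ≠ 1) (hn : i ≠ n)
    (hn1 : i ≠ n + 1) : wheelExtendD n d r i = d i := by
  rw [wheelExtendD, if_neg h0, if_neg h1, if_neg hn, if_neg hn1]

theorem wheelExtendD_pos (hn : 1 ≤ n) (hd : ∀ i ≤ n, 0 < d i) :
    ∀ i ≤ n + 1, 0 < wheelExtendD n d r i := by
  intro i hi
  unfold wheelExtendD
  split_ifs
  · exact Nat.add_pos_left (hd 0 (Nat.zero_le n)) _
  · exact Nat.add_pos_left (hd 1 (by omega)) _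
  · exact Nat.add_pos_left (hd n le_rfl) _
  · exact Nat.one_pos
  · exact hd i (by omega)

theorem wheelExtendR_pos (hr : ∀ i ≤ n, 0 < r i) : ∀ i ≤ n + 1, 0 < wheelExtendR n r i := by
  intro i hi
  unfold wheelExtendR
  split_ifs
  · exact Nat.add_pos_right _ (hr 0 (Nat.zero_le n))
  · exact hr i (by omega)

theorem gcd_range_wheelExtendR (h : (Finset.range (n + 1)).gcd r = 1) :
    (Finset.range (n + 2)).gcd (wheelExtendR n r) = 1 := by
  apply Nat.dvd_one.mp
  calc (Finset.range (n + 2)).gcd (wheelExtendR n r)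
      ∣ (Finset.range (n + 1)).gcd (wheelExtendR n r) :=
        Finset.gcd_mono (Finset.range_subset_range.mpr (by omega))
    _ = (Finset.range (n + 1)).gcd r :=
        Finset.gcd_congr rfl fun i hi => wheelExtendR_of_ne (by simp at hi; omega)
    _ = 1 := h

theorem sum_Icc_wheelExtendR :
    ∑ i ∈ Finset.Icc 1 (n + 1), wheelExtendR n r i
      = ∑ i ∈ Finset.Icc 1 n, r i + (r 1 + r n + r 0) := by
  rw [Finset.sum_Icc_succ_top (by omega), wheelExtendR_self_add_one]
  congr 1
  exact Finset.sum_congr rfl fun i hi => wheelExtendR_of_ne (by simp at hi; omega)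

theorem wheelExtend_hub (h : d 0 * r 0 = ∑ i ∈ Finset.Icc 1 n, r i) (h1 : r 0 ∣ r 1 + r n) :
    wheelExtendD n d r 0 * wheelExtendR n r 0
      = ∑ i ∈ Finset.Icc 1 (n + 1), wheelExtendR n r i := by
  rw [sum_Icc_wheelExtendR, ← h, wheelExtendR_of_ne (by omega), wheelExtendD, if_pos rfl,
    Nat.add_div_mul_of_dvd _ (dvd_add h1 dvd_rfl)]

theorem wheelExtend_cycle (hn : 2 ≤ n)
    (h : ∀ i, 1 ≤ i → i ≤ n → d i * r i = r 0 + r (cyclePrev n i) + r (cycleNext n i))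
    (h2 : r n ∣ r 0) (h3 : r 1 ∣ r 0) (i : ℕ) (hi1 : 1 ≤ i) (hi2 : i ≤ n + 1) :
    wheelExtendD n d r i * wheelExtendR n r i = wheelExtendR n r 0
      + wheelExtendR n r (cyclePrev (n + 1) i) + wheelExtendR n r (cycleNext (n + 1) i) := by
  rcases eq_or_ne i 1 with rfl | hi1'
  · have old := h 1 le_rfl (by omega)
    simp (disch := omega) only [wheelExtendD_one, cyclePrev_one, cycleNext_of_ne,
      wheelExtendR_self_add_one, wheelExtendR_of_ne] at old ⊢
    rw [Nat.add_div_mul_of_dvd _ (dvd_add dvd_rfl h3)]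
    omega
  rcases eq_or_ne i n with rfl | hin
  · have old := h i (by omega) le_rfl
    simp (disch := omega) only [wheelExtendD_self, cyclePrev_of_ne_one, cycleNext_self,
      cycleNext_of_ne, wheelExtendR_self_add_one, wheelExtendR_of_ne] at old ⊢
    rw [Nat.add_div_mul_of_dvd _ (dvd_add dvd_rfl h2)]
    omega
  rcases eq_or_ne i (n + 1) with rfl | hin1
  · simp (disch := omega) only [wheelExtendD_self_add_one, cyclePrev_of_ne_one, cycleNext_self,
      wheelExtendR_self_add_one, wheelExtendR_of_ne, Nat.add_sub_cancel]
    omega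
  · have old := h i hi1 (by omega)
    simpa (disch := omega) only [wheelExtendD_of_ne, cyclePrev_of_ne_one, cycleNext_of_ne,
      wheelExtendR_of_ne] using old

end WheelExtend

/-- From an arithmetical structure on `W_n` with `r 0 ∣ r 1 + r n`, `r n ∣ r 0`,
`r 1 ∣ r 0`, one obtains an arithmetical structure on `W_{n+1}`, where the new cycle
vertex `v_{n+1}` is inserted between `v_n` and `v_1`. -/
theorem wheel_structure_extend (n : ℕ) (hn : 3 ≤ n) (d r : ℕ → ℕ)
    (h : IsWheelArithStructure n d r)
    (h1 : r 0 ∣ r 1 + r n) (h2 : r n ∣ r 0) (h3 : r 1 ∣ r 0) :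
    IsWheelArithStructure (n + 1)
      (fun i =>
        if i = 0 then d 0 + (r 1 + r n + r 0) / r 0
        else if i = 1 then d 1 + (r 1 + r 0) / r 1
        else if i = n then d n + (r n + r 0) / r n
        else if i = n + 1 then 1
        else d i)
      (fun i => if i = n + 1 then r 1 + r n + r 0 else r i) := by
  obtain ⟨hd, hr, hgcd, hhub, hcyc⟩ := h
  exact ⟨wheelExtendD_pos (by omega) hd, wheelExtendR_pos hr, gcd_range_wheelExtendR hgcd,
    wheelExtend_hub hhub h1, wheelExtend_cycle (by omega) hcyc h2 h3⟩
end

section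
/- Every arithmetical d-structure (d_0, d_1, d_2, d_3, d_4) on the star graph S_4 (with center v_0 and leaves v_1,...,v_4) satisfies d_0 = 1/d_1 + 1/d_2 + 1/d_3 + 1/d_4, and conversely every positive integer solution of this equation arises from an arithmetical structure on S_4. -/
/-- `(d, r)` is an arithmetical structure on the star graph `S_4` with center `v_0`
(index `0`) and leaves `v_1, …, v_4`. -/
def IsStarArithStructure (d r : Fin 5 → ℕ) : Prop :=
  (∀ i, 0 < d i) ∧ (∀ i, 0 < r i) ∧ Finset.univ.gcd r = 1 ∧
  d 0 * r 0 = r 1 + r 2 + r 3 + r 4 ∧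
  ∀ i : Fin 5, i ≠ 0 → d i * r i = r 0

/-- Every arithmetical d-structure on `S_4` satisfies `d_0 = 1/d_1 + 1/d_2 + 1/d_3 + 1/d_4`,
and conversely every positive integer solution of this Egyptian-fraction equation arises
from an arithmetical structure on `S_4`. -/
theorem star_dStructure_iff_egyptian_fraction :
    (∀ d r : Fin 5 → ℕ, IsStarArithStructure d r →
      (d 0 : ℚ) = 1 / (d 1 : ℚ) + 1 / (d 2 : ℚ) + 1 / (d 3 : ℚ) + 1 / (d 4 : ℚ)) ∧
    (∀ d : Fin 5 → ℕ, (∀ i, 0 < d i) →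
      (d 0 : ℚ) = 1 / (d 1 : ℚ) + 1 / (d 2 : ℚ) + 1 / (d 3 : ℚ) + 1 / (d 4 : ℚ) →
      ∃ r : Fin 5 → ℕ, IsStarArithStructure d r) := by
  constructor
  · rintro d r ⟨hd, hr, -, h0, hi⟩
    have h1 := hi 1 (by decide)
    have h2 := hi 2 (by decide)
    have h3 := hi 3 (by decide)
    have h4 := hi 4 (by decide)
    have hr0 : (r 0 : ℚ) ≠ 0 := Nat.cast_ne_zero.2 (hr 0).ne'
    have key : ∀ i : Fin 5, i ≠ 0 → (1 : ℚ) / d i = r i / r 0 := by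
      intro i hi0
      have hdi : (d i : ℚ) ≠ 0 := Nat.cast_ne_zero.2 (hd i).ne'
      have : (d i : ℚ) * r i = r 0 := by exact_mod_cast congrArg (Nat.cast : ℕ → ℚ) (hi i hi0)
      field_simp
      linarith [this]
    rw [key 1 (by decide), key 2 (by decide), key 3 (by decide), key 4 (by decide)]
    have h0' : (d 0 : ℚ) * r 0 = r 1 + r 2 + r 3 + r 4 := by exact_mod_cast congrArg (Nat.cast : ℕ → ℚ) h0
    field_simp
    linarith [h0']
  · intro d hd heq
    set L : ℕ := Nat.lcm (d 1) (Nat.lcm (d 2) (Nat.lcm (d 3) (d 4))) with hL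
    have hLpos : 0 < L := Nat.pos_of_ne_zero (by
      have := Nat.lcm_ne_zero (hd 3).ne' (hd 4).ne'
      have := Nat.lcm_ne_zero (hd 2).ne' this
      exact Nat.lcm_ne_zero (hd 1).ne' this)
    have hdvd : ∀ i : Fin 5, i ≠ 0 → d i ∣ L := by
      intro i hi
      fin_cases i
      · exact absurd rfl hi
      · exact Nat.dvd_lcm_left _ _
      · exact dvd_trans (Nat.dvd_lcm_left _ _) (Nat.dvd_lcm_right _ _)
      · exact dvd_trans (dvd_trans (Nat.dvd_lcm_left _ _) (Nat.dvd_lcm_right _ _)) (Nat.dvd_lcm_right _ _)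
      · exact dvd_trans (dvd_trans (Nat.dvd_lcm_right _ _) (Nat.dvd_lcm_right _ _)) (Nat.dvd_lcm_right _ _)
    -- unscaled solution
    set s : Fin 5 → ℕ := fun i => if i = 0 then L else L / d i with hs
    have hspos : ∀ i, 0 < s i := by
      intro i
      by_cases hi : i = 0
      · simp [hs, hi, hLpos]
      · simp only [hs, if_neg hi]
        exact Nat.div_pos (Nat.le_of_dvd hLpos (hdvd i hi)) (hd i)
    have hmul : ∀ i : Fin 5, i ≠ 0 → d i * s i = s 0 := by
      intro i hi
      simp only [hs, if_neg hi, if_pos rfl]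
      exact Nat.mul_div_cancel' (hdvd i hi)
    have hcast : ∀ i : Fin 5, i ≠ 0 → (s i : ℚ) = L / d i := by
      intro i hi
      simp only [hs, if_neg hi]
      exact Nat.cast_div (hdvd i hi) (Nat.cast_ne_zero.2 (hd i).ne')
    have hsum : d 0 * s 0 = s 1 + s 2 + s 3 + s 4 := by
      have : ((d 0 * s 0 : ℕ) : ℚ) = ((s 1 + s 2 + s 3 + s 4 : ℕ) : ℚ) := by
        push_cast
        rw [hcast 1 (by decide), hcast 2 (by decide), hcast 3 (by decide),
          hcast 4 (by decide)]
        have hs0 : (s 0 : ℚ) = L := by simp [hs]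
        rw [hs0, heq]
        have h1 : (d 1 : ℚ) ≠ 0 := Nat.cast_ne_zero.2 (hd 1).ne'
        have h2 : (d 2 : ℚ) ≠ 0 := Nat.cast_ne_zero.2 (hd 2).ne'
        have h3 : (d 3 : ℚ) ≠ 0 := Nat.cast_ne_zero.2 (hd 3).ne'
        have h4 : (d 4 : ℚ) ≠ 0 := Nat.cast_ne_zero.2 (hd 4).ne'
        field_simp
      exact_mod_cast this
    -- scale down by gcd
    set g : ℕ := Finset.univ.gcd s with hg
    have hgdvd : ∀ i, g ∣ s i := fun i => Finset.gcd_dvd (Finset.mem_univ i)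
    have hgpos : 0 < g := Nat.pos_of_ne_zero fun h => by
      have := Finset.gcd_eq_zero_iff.1 (hg ▸ h) 0 (Finset.mem_univ 0)
      exact (hspos 0).ne' this
    refine ⟨fun i => s i / g, fun i => hd i, fun i => Nat.div_pos
      (Nat.le_of_dvd (hspos i) (hgdvd i)) hgpos, ?_, ?_, ?_⟩
    · exact Finset.gcd_div_eq_one (Finset.mem_univ 0) (hspos 0).ne'
    · have : g * (d 0 * (s 0 / g)) = g * ((s 1 / g) + (s 2 / g) + (s 3 / g) + (s 4 / g)) := by
        rw [Nat.mul_left_comm, Nat.mul_div_cancel' (hgdvd 0), Nat.mul_add, Nat.mul_add,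
          Nat.mul_add, Nat.mul_div_cancel' (hgdvd 1), Nat.mul_div_cancel' (hgdvd 2),
          Nat.mul_div_cancel' (hgdvd 3), Nat.mul_div_cancel' (hgdvd 4), hsum]
      exact Nat.eq_of_mul_eq_mul_left hgpos this
    · intro i hi
      have : g * (d i * (s i / g)) = g * (s 0 / g) := by
        rw [Nat.mul_left_comm, Nat.mul_div_cancel' (hgdvd i), Nat.mul_div_cancel' (hgdvd 0),
          hmul i hi]
      exact Nat.eq_of_mul_eq_mul_left hgpos this
end
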